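/- arXiv:1509.02897 — 3 statements merged into one kernel-verified Lean document; each statement's English description precedes it below -/
import Mathlib

section
/- Let A ⊆ ℝ² be a closed set. For r > 0, let μ_A(r) = μ(A ∩ rS¹)/(2πr), where μ is one-dimensional Lebesgue (arc-length) measure on the circle rS¹ of radius r centered at the origin, and let Δ_A = inf{r > 0 : μ_A(r) > 0}. Let 𝒢 denote the standard Gaussian measure on ℝ². If r ↦ μ_A(r) is non-decreasing, then sup_{r > 0} ( μ_A(r) · e^{−r²/2} ) ≤ 𝒢(A) ≤ e^{−Δ_A²/2}. -/
open MeasureTheory ProbabilityTheory Real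

noncomputable section

/-- The standard Gaussian measure `𝒢` on `ℝ²` (product of two standard Gaussians). -/
def gauss2 : Measure (ℝ × ℝ) := (gaussianReal 0 1).prod (gaussianReal 0 1)

/-- `μ_A(r)`: the normalized arc-length measure of `A ∩ rS¹`, i.e. the fraction of the circle
of radius `r` centered at the origin lying in `A`. -/
def circFrac (A : Set (ℝ × ℝ)) (r : ℝ) : ℝ :=
  (volume {θ : ℝ | θ ∈ Set.Ico 0 (2 * π) ∧ (r * Real.cos θ, r * Real.sin θ) ∈ A}).toReal
    / (2 * π)

/-- `Δ_A = inf {r > 0 : μ_A(r) > 0}`, the essential distance from the origin to `A`. -/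
def essDist (A : Set (ℝ × ℝ)) : ℝ := sInf {r : ℝ | 0 < r ∧ 0 < circFrac A r}

/-!
In polar coordinates the Gaussian density is `(2π)⁻¹ r e^{-r²/2}` and the angular integral over
`A ∩ rS¹` contributes `2π μ_A(r)`, so `𝒢(A) = ∫₀^∞ r e^{-r²/2} μ_A(r) dr`, and
`∫_a^∞ r e^{-r²/2} dr = e^{-a²/2}`. Monotonicity gives `μ_A(r) ≥ μ_A(r₀)` on `(r₀, ∞)`, hence
the lower bound; `μ_A = 0` on `(0, Δ_A)` and `μ_A ≤ 1` give the upper bound.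
-/

open Set Filter Topology
open scoped ENNReal

instance : IsProbabilityMeasure gauss2 := by
  unfold gauss2; infer_instance

theorem Function.Periodic.volume_preimage_inter_Ioc_eq {α : Type*} {f : ℝ → α} {T : ℝ}
    (hf : Function.Periodic f T) (hT : 0 < T) {A : Set α} (hA : MeasurableSet (f ⁻¹' A))
    (s t : ℝ) :
    volume (f ⁻¹' A ∩ Ioc s (s + T)) = volume (f ⁻¹' A ∩ Ioc t (t + T)) := by
  refine (isAddFundamentalDomain_Ioc hT s).measure_set_eq (isAddFundamentalDomain_Ioc hT t) hA ?_
  rintro ⟨g, hg⟩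
  obtain ⟨n, rfl⟩ := AddSubgroup.mem_zmultiples_iff.1 hg
  ext x
  change f (n • T + x) ∈ A ↔ f x ∈ A
  rw [add_comm, hf.zsmul n x]

theorem lintegral_eq_lintegral_Ioi_lintegral_Ioo {f : ℝ × ℝ → ℝ≥0∞} (hf : Measurable f) :
    ∫⁻ p, f p =
      ∫⁻ r in Ioi 0, ∫⁻ θ in Ioo (-π) π, ENNReal.ofReal r * f (r * cos θ, r * sin θ) := by
  rw [← lintegral_comp_polarCoord_symm, polarCoord_target, Measure.volume_eq_prod,
    ← Measure.prod_restrict, lintegral_prod _ (by fun_prop)]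
  rfl

theorem lintegral_Ioi_mul_exp_neg_sq_div_two {a : ℝ} (ha : 0 ≤ a) :
    ∫⁻ r in Ioi a, ENNReal.ofReal (r * exp (-r ^ 2 / 2)) = ENNReal.ofReal (exp (-a ^ 2 / 2)) := by
  have hderiv : ∀ x ∈ Ici a,
      HasDerivAt (fun x : ℝ => -exp (-x ^ 2 / 2)) (x * exp (-x ^ 2 / 2)) x := by
    intro x _
    refine ((hasDerivAt_pow 2 x).fun_neg.div_const 2).exp.fun_neg.congr_deriv ?_
    push_cast
    ring
  have hnonneg : ∀ x ∈ Ioi a, 0 ≤ x * exp (-x ^ 2 / 2) :=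
    fun x hx => mul_nonneg (ha.trans hx.out.le) (exp_nonneg _)
  have hlim : Tendsto (fun x : ℝ => -exp (-x ^ 2 / 2)) atTop (𝓝 0) := by
    have hexponent : Tendsto (fun x : ℝ => -x ^ 2 / 2) atTop atBot :=
      (tendsto_neg_atTop_atBot.comp (tendsto_pow_atTop two_ne_zero)).atBot_div_const two_pos
    simpa using (tendsto_exp_atBot.comp hexponent).neg
  rw [← ofReal_integral_eq_lintegral_ofReal (integrableOn_Ioi_deriv_of_nonneg' hderiv hnonneg hlim)
    ((ae_restrict_iff' measurableSet_Ioi).2 (ae_of_all _ hnonneg)),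
    integral_Ioi_of_hasDerivAt_of_nonneg' hderiv hnonneg hlim, zero_sub, neg_neg]

theorem gaussianPDF_mul_gaussianPDF (x y : ℝ) :
    gaussianPDF 0 1 x * gaussianPDF 0 1 y =
      ENNReal.ofReal ((2 * π)⁻¹ * exp (-(x ^ 2 + y ^ 2) / 2)) := by
  rw [gaussianPDF, gaussianPDF, ← ENNReal.ofReal_mul (gaussianPDFReal_nonneg _ _ _),
    gaussianPDFReal, gaussianPDFReal]
  congr 1
  have hsq : √(2 * π) * √(2 * π) = 2 * π := Real.mul_self_sqrt (by positivity)
  rw [NNReal.coe_one, mul_one, mul_mul_mul_comm, ← mul_inv, hsq, ← exp_add]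
  ring_nf

theorem gauss2_eq_withDensity : gauss2 =
    volume.withDensity fun p => ENNReal.ofReal ((2 * π)⁻¹ * exp (-(p.1 ^ 2 + p.2 ^ 2) / 2)) := by
  rw [gauss2, gaussianReal_of_var_ne_zero _ one_ne_zero,
    prod_withDensity (measurable_gaussianPDF 0 1) (measurable_gaussianPDF 0 1),
    ← Measure.volume_eq_prod]
  simp_rw [gaussianPDF_mul_gaussianPDF]

theorem circFrac_nonneg (A : Set (ℝ × ℝ)) (r : ℝ) : 0 ≤ circFrac A r :=
  div_nonneg ENNReal.toReal_nonneg (by positivity)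

theorem circFrac_le_one (A : Set (ℝ × ℝ)) (r : ℝ) : circFrac A r ≤ 1 := by
  rw [circFrac, div_le_one (by positivity)]
  calc _ ≤ (volume (Ico 0 (2 * π))).toReal :=
        ENNReal.toReal_mono (by simp [ENNReal.mul_eq_top]) (measure_mono fun θ h => h.1)
    _ = 2 * π := by simp [Real.volume_Ico, pi_pos.le]

theorem circFrac_eq_zero_of_lt_essDist {A : Set (ℝ × ℝ)} {r : ℝ} (hr : 0 < r)
    (hrA : r < essDist A) : circFrac A r = 0 :=
  (circFrac_nonneg A r).eq_or_lt'.resolve_right fun hpos =>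
    hrA.not_ge (csInf_le ⟨0, fun _ hs => hs.1.le⟩ ⟨hr, hpos⟩)

theorem essDist_nonneg (A : Set (ℝ × ℝ)) : 0 ≤ essDist A :=
  Real.sInf_nonneg fun _ hr => hr.1.le

/-- Periodicity reconciles the angles `[0, 2π)` of `circFrac` with the `(-π, π)` of polar
coordinates. -/
theorem volume_arc_eq_ofReal_circFrac {A : Set (ℝ × ℝ)} (hA : MeasurableSet A) (r : ℝ) :
    volume ({θ : ℝ | (r * cos θ, r * sin θ) ∈ A} ∩ Ioo (-π) π) =
      ENNReal.ofReal (2 * π * circFrac A r) := by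
  set f : ℝ → ℝ × ℝ := fun θ => (r * cos θ, r * sin θ)
  have hf : Function.Periodic f (2 * π) := fun θ => by simp [f]
  have hS : MeasurableSet (f ⁻¹' A) := (by fun_prop : Continuous f).measurable hA
  have hset : {θ : ℝ | θ ∈ Ico 0 (2 * π) ∧ f θ ∈ A} = f ⁻¹' A ∩ Ico 0 (2 * π) := by
    ext θ; exact and_comm
  have hfin : volume (f ⁻¹' A ∩ Ico 0 (2 * π)) ≠ ⊤ :=
    measure_ne_top_of_subset inter_subset_right (by simp [ENNReal.mul_eq_top])
  calc volume (f ⁻¹' A ∩ Ioo (-π) π)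
      = volume (f ⁻¹' A ∩ Ioc (-π) (-π + 2 * π)) := by
        rw [show -π + 2 * π = π by ring]
        exact measure_congr ((ae_eq_refl _).inter Ioo_ae_eq_Ioc)
    _ = volume (f ⁻¹' A ∩ Ioc 0 (0 + 2 * π)) :=
        hf.volume_preimage_inter_Ioc_eq two_pi_pos hS _ _
    _ = volume (f ⁻¹' A ∩ Ico 0 (2 * π)) := by
        rw [zero_add]
        exact measure_congr ((ae_eq_refl _).inter (Ioc_ae_eq_Icc.trans Ico_ae_eq_Icc.symm))
    _ = ENNReal.ofReal (2 * π * circFrac A r) := by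
        rw [circFrac, ← hset, mul_div_cancel₀ _ two_pi_pos.ne', ENNReal.ofReal_toReal (hset ▸ hfin)]

theorem gauss2_apply_eq_lintegral_circFrac {A : Set (ℝ × ℝ)} (hA : MeasurableSet A) :
    gauss2 A = ∫⁻ r in Ioi 0, ENNReal.ofReal (r * exp (-r ^ 2 / 2) * circFrac A r) := by
  rw [gauss2_eq_withDensity, withDensity_apply _ hA, ← lintegral_indicator hA,
    lintegral_eq_lintegral_Ioi_lintegral_Ioo ((by fun_prop : Measurable _).indicator hA)]
  refine setLIntegral_congr_fun measurableSet_Ioi fun r hr => ?_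
  set S := {θ : ℝ | (r * cos θ, r * sin θ) ∈ A}
  have hS : MeasurableSet S :=
    (by fun_prop : Continuous fun θ : ℝ => (r * cos θ, r * sin θ)).measurable hA
  have hradial : ∀ θ, A.indicator
      (fun p => ENNReal.ofReal ((2 * π)⁻¹ * exp (-(p.1 ^ 2 + p.2 ^ 2) / 2))) (r * cos θ, r * sin θ)
        = S.indicator (fun _ => ENNReal.ofReal ((2 * π)⁻¹ * exp (-r ^ 2 / 2))) θ := by
    intro θ
    have hnorm : (r * cos θ) ^ 2 + (r * sin θ) ^ 2 = r ^ 2 := by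
      linear_combination r ^ 2 * cos_sq_add_sin_sq θ
    by_cases h : (r * cos θ, r * sin θ) ∈ A
    · rw [indicator_of_mem h, indicator_of_mem (show θ ∈ S from h), hnorm]
    · rw [indicator_of_notMem h, indicator_of_notMem (show θ ∉ S from h)]
  simp_rw [hradial]
  rw [lintegral_const_mul' _ _ ENNReal.ofReal_ne_top, lintegral_indicator_const hS,
    Measure.restrict_apply hS, volume_arc_eq_ofReal_circFrac hA,
    ← ENNReal.ofReal_mul (by positivity), ← ENNReal.ofReal_mul hr.le]
  congr 1
  field_simp

theorem ofReal_circFrac_mul_exp_le_gauss2 {A : Set (ℝ × ℝ)} (hA : MeasurableSet A)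
    (hmono : MonotoneOn (circFrac A) (Ioi 0)) {r₀ : ℝ} (hr₀ : 0 < r₀) :
    ENNReal.ofReal (circFrac A r₀ * exp (-r₀ ^ 2 / 2)) ≤ gauss2 A :=
  calc ENNReal.ofReal (circFrac A r₀ * exp (-r₀ ^ 2 / 2))
      = ∫⁻ r in Ioi r₀, ENNReal.ofReal (r * exp (-r ^ 2 / 2) * circFrac A r₀) := by
        simp_rw [ENNReal.ofReal_mul' (circFrac_nonneg A r₀)]
        rw [lintegral_mul_const' _ _ ENNReal.ofReal_ne_top,
          lintegral_Ioi_mul_exp_neg_sq_div_two hr₀.le, mul_comm (circFrac A r₀),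
          ENNReal.ofReal_mul (exp_nonneg _)]
    _ ≤ ∫⁻ r in Ioi r₀, ENNReal.ofReal (r * exp (-r ^ 2 / 2) * circFrac A r) :=
        setLIntegral_mono' measurableSet_Ioi fun r hr =>
          ENNReal.ofReal_le_ofReal <| mul_le_mul_of_nonneg_left
            (hmono hr₀ (hr₀.trans hr) hr.out.le) (by have := hr₀.trans hr.out; positivity)
    _ ≤ ∫⁻ r in Ioi 0, ENNReal.ofReal (r * exp (-r ^ 2 / 2) * circFrac A r) :=
        lintegral_mono_set (Ioi_subset_Ioi hr₀.le)
    _ = gauss2 A := (gauss2_apply_eq_lintegral_circFrac hA).symm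

theorem gauss2_le_ofReal_exp_essDist {A : Set (ℝ × ℝ)} (hA : MeasurableSet A) :
    gauss2 A ≤ ENNReal.ofReal (exp (-essDist A ^ 2 / 2)) := by
  set g : ℝ → ℝ≥0∞ := fun r => ENNReal.ofReal (r * exp (-r ^ 2 / 2))
  have hle : ∀ r ∈ Ioi (0 : ℝ),
      ENNReal.ofReal (r * exp (-r ^ 2 / 2) * circFrac A r) ≤ (Ici (essDist A)).indicator g r := by
    intro r hr
    rcases lt_or_ge r (essDist A) with hrA | hrA
    · simp [circFrac_eq_zero_of_lt_essDist hr hrA]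
    · rw [indicator_of_mem (mem_Ici.2 hrA)]
      exact ENNReal.ofReal_le_ofReal <| mul_le_of_le_one_right (by have := hr.out; positivity)
        (circFrac_le_one A r)
  calc gauss2 A = ∫⁻ r in Ioi 0, ENNReal.ofReal (r * exp (-r ^ 2 / 2) * circFrac A r) :=
        gauss2_apply_eq_lintegral_circFrac hA
    _ ≤ ∫⁻ r in Ioi 0, (Ici (essDist A)).indicator g r := setLIntegral_mono' measurableSet_Ioi hle
    _ ≤ ∫⁻ r, (Ici (essDist A)).indicator g r := setLIntegral_le_lintegral _ _
    _ = ∫⁻ r in Ioi (essDist A), g r := by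
        rw [lintegral_indicator measurableSet_Ici, setLIntegral_congr Ioi_ae_eq_Ici]
    _ = ENNReal.ofReal (exp (-essDist A ^ 2 / 2)) :=
        lintegral_Ioi_mul_exp_neg_sq_div_two (essDist_nonneg A)

/-- If `A ⊆ ℝ²` is closed and `r ↦ μ_A(r)` is non-decreasing, then
`sup_{r>0} (μ_A(r) e^{-r²/2}) ≤ 𝒢(A) ≤ e^{-Δ_A²/2}`. -/
theorem gaussian_measure_of_radially_monotone (A : Set (ℝ × ℝ)) (hA : IsClosed A)
    (hmono : MonotoneOn (circFrac A) (Set.Ioi (0 : ℝ))) :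
    (∀ r : ℝ, 0 < r → circFrac A r * Real.exp (-r ^ 2 / 2) ≤ (gauss2 A).toReal) ∧
      (gauss2 A).toReal ≤ Real.exp (-(essDist A) ^ 2 / 2) :=
  ⟨fun _ hr => (ENNReal.ofReal_le_iff_le_toReal (measure_ne_top _ _)).1
      (ofReal_circFrac_mul_exp_le_gauss2 hA.measurableSet hmono hr),
    ENNReal.toReal_le_of_le_ofReal (exp_nonneg _) (gauss2_le_ofReal_exp_essDist hA.measurableSet)⟩
end
end

section
/- Let 0 < τ < 2, α = 1 − τ²/2, β = √(τ² − τ⁴/4). For u, v ∈ ℝ with u ≥ 0 and αu + βv ≥ 0, define σ(u,v) = Pr_{X₂,Y₂ ~ N(0,1), independent}[ |X₂| ≤ u and |αX₂ + βY₂| ≤ αu + βv ] and Δ(u,v) = min{u, αu + βv}. There is a universal constant c > 0 such that for every such u, v and every 0 < ε < 1/3: 1 − e^{−Δ(u,v)²/2} ≤ σ(u,v) ≤ 1 − c · ε^{1/2} · e^{−(1+ε)·Δ(u,v)²/2}. -/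
/-!
The event defining `σ(u, v)` contains the disk of radius `Δ = min(u, αu + βv)`: by
Cauchy–Schwarz and `α² + β² = 1`, both `|X₂|` and `|αX₂ + βY₂|` are at most the Euclidean norm
of `(X₂, Y₂)`. In polar coordinates the standard Gaussian measure of that disk is
`1 - e^{-Δ²/2}`.

Conversely, the event lies in `{X₂ ≤ u}` and in `{αX₂ + βY₂ ≤ αu + βv}`, and both `X₂` and
`αX₂ + βY₂` are standard Gaussians, so `σ(u, v) ≤ 1 - P(N(0,1) > Δ)`. Finally
`P(N(0,1) > t) ≥ s φ(t + s)` for `t, s ≥ 0`; taking `s = √ε` and using `2t√ε ≤ εt² + 1`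
gives the upper bound with `c = e^{-1}/√(2π)`.
-/

open MeasureTheory ProbabilityTheory Real

noncomputable section

/-- `σ(u,v) = Pr_{X₂,Y₂}[ |X₂| ≤ u ∧ |αX₂ + βY₂| ≤ αu + βv ]`. -/
def sigmaProb (α β u v : ℝ) : ℝ :=
  (gauss2 {z : ℝ × ℝ | |z.1| ≤ u ∧ |α * z.1 + β * z.2| ≤ α * u + β * v}).toReal

open Set

instance inst_s5 : IsProbabilityMeasure gauss2 := by
  unfold gauss2; infer_instance

lemma gaussianPDFReal_zero_one (x : ℝ) :
    gaussianPDFReal 0 1 x = (√(2 * π))⁻¹ * exp (-x ^ 2 / 2) := by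
  simp [gaussianPDFReal]

lemma gaussianPDFReal_zero_one_antitoneOn : AntitoneOn (gaussianPDFReal 0 1) (Ici 0) := by
  intro x hx y _ hxy
  simp only [gaussianPDFReal_zero_one]
  gcongr

lemma mul_gaussianPDFReal_le_gaussianReal_real_Ioi {t s : ℝ} (ht : 0 ≤ t) (hs : 0 ≤ s) :
    s * gaussianPDFReal 0 1 (t + s) ≤ (gaussianReal 0 1).real (Ioi t) := by
  calc s * gaussianPDFReal 0 1 (t + s)
      = ∫ _ in Ioc t (t + s), gaussianPDFReal 0 1 (t + s) := by
        rw [setIntegral_const, volume_real_Ioc_of_le (by linarith), add_sub_cancel_left,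
          smul_eq_mul]
    _ ≤ ∫ x in Ioc t (t + s), gaussianPDFReal 0 1 x := by
        refine setIntegral_mono_on (integrableOn_const measure_Ioc_lt_top.ne)
          (integrable_gaussianPDFReal 0 1).integrableOn measurableSet_Ioc fun x hx => ?_
        exact gaussianPDFReal_zero_one_antitoneOn (ht.trans hx.1.le) (by simp; linarith) hx.2
    _ = (gaussianReal 0 1).real (Ioc t (t + s)) := by
        rw [measureReal_def, gaussianReal_apply_eq_integral _ one_ne_zero,
          ENNReal.toReal_ofReal (setIntegral_nonneg measurableSet_Ioc
            fun x _ => gaussianPDFReal_nonneg 0 1 x)]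
    _ ≤ (gaussianReal 0 1).real (Ioi t) := measureReal_mono Ioc_subset_Ioi_self

lemma sqrt_mul_exp_le_gaussianReal_real_Ioi {t ε : ℝ} (ht : 0 ≤ t) (hε : 0 ≤ ε) (hε1 : ε ≤ 1) :
    (√(2 * π))⁻¹ * exp (-1) * √ε * exp (-((1 + ε) * t ^ 2) / 2)
      ≤ (gaussianReal 0 1).real (Ioi t) := by
  refine le_trans ?_ (mul_gaussianPDFReal_le_gaussianReal_real_Ioi ht (sqrt_nonneg ε))
  have hexp : exp (-1) * exp (-((1 + ε) * t ^ 2) / 2) ≤ exp (-(t + √ε) ^ 2 / 2) := by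
    rw [← exp_add, exp_le_exp]
    nlinarith [sq_nonneg (t * √ε - 1), sq_sqrt hε]
  calc _ = √ε * ((√(2 * π))⁻¹ * (exp (-1) * exp (-((1 + ε) * t ^ 2) / 2))) := by ring
    _ ≤ _ := by rw [gaussianPDFReal_zero_one]; gcongr

lemma measureReal_le_one_sub_map_real_Ioi {Ω : Type*} [MeasurableSpace Ω] {μ : Measure Ω}
    [IsProbabilityMeasure μ] {f : Ω → ℝ} (hf : Measurable f) {S : Set Ω} {t : ℝ}
    (hS : S ⊆ {ω | f ω ≤ t}) :
    μ.real S ≤ 1 - (μ.map f).real (Ioi t) := by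
  rw [map_measureReal_apply hf measurableSet_Ioi,
    ← probReal_compl_eq_one_sub (hf measurableSet_Ioi)]
  exact measureReal_mono fun ω hω => by simpa using hS hω

lemma gauss2_map_fst : gauss2.map Prod.fst = gaussianReal 0 1 := by
  simp [gauss2]

lemma gauss2_map_linear (a b : ℝ) :
    gauss2.map (fun z => a * z.1 + b * z.2)
      = gaussianReal 0 (.mk (a ^ 2) (sq_nonneg a) + .mk (b ^ 2) (sq_nonneg b)) := by
  have hcomp : (fun z : ℝ × ℝ => a * z.1 + b * z.2)
      = (fun z : ℝ × ℝ => z.1 + z.2) ∘ Prod.map (a * ·) (b * ·) := rfl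
  rw [gauss2, hcomp, ← Measure.map_map (by fun_prop) (by fun_prop),
    ← Measure.map_prod_map _ _ (by fun_prop) (by fun_prop), gaussianReal_map_const_mul,
    gaussianReal_map_const_mul, ← Measure.conv, gaussianReal_conv_gaussianReal]
  simp

lemma gauss2_map_linear_of_sq_add_sq_eq_one {a b : ℝ} (h : a ^ 2 + b ^ 2 = 1) :
    gauss2.map (fun z => a * z.1 + b * z.2) = gaussianReal 0 1 := by
  rw [gauss2_map_linear]
  congr
  exact NNReal.eq h

lemma integral_fun_sq_add_sq (F : ℝ → ℝ) :
    ∫ p : ℝ × ℝ, F (p.1 ^ 2 + p.2 ^ 2) = 2 * π * ∫ r in Ioi 0, r * F (r ^ 2) := by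
  rw [← integral_comp_polarCoord_symm]
  have hpolar : ∀ q ∈ polarCoord.target,
      q.1 • F ((polarCoord.symm q).1 ^ 2 + (polarCoord.symm q).2 ^ 2) = q.1 * F (q.1 ^ 2) := by
    intro q _
    rw [polarCoord_symm_apply, smul_eq_mul]
    congr 2
    linear_combination q.1 ^ 2 * sin_sq_add_cos_sq q.2
  rw [setIntegral_congr_fun polarCoord.open_target.measurableSet hpolar,
    show polarCoord.target = Ioi 0 ×ˢ Ioo (-π) π from rfl, Measure.volume_eq_prod,
    ← Measure.prod_restrict, integral_fun_fst (fun r => r * F (r ^ 2)),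
    measureReal_restrict_apply_univ, volume_real_Ioo_of_le (by linarith [pi_pos]), smul_eq_mul]
  ring

lemma integral_mul_exp_neg_sq_div_two (r : ℝ) :
    ∫ x in (0)..r, x * exp (-x ^ 2 / 2) = 1 - exp (-r ^ 2 / 2) := by
  have hderiv (x : ℝ) : HasDerivAt (fun x => -exp (-x ^ 2 / 2)) (x * exp (-x ^ 2 / 2)) x := by
    have h : HasDerivAt (fun x : ℝ => -x ^ 2 / 2) (-x) x :=
      ((hasDerivAt_pow 2 x).neg.div_const 2).congr_deriv (by ring)
    exact h.exp.neg.congr_deriv (by ring)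
  rw [intervalIntegral.integral_eq_sub_of_hasDerivAt (fun x _ => hderiv x)
    (Continuous.intervalIntegrable (by fun_prop) 0 r)]
  simp
  ring

lemma gaussianPDFReal_mul_gaussianPDFReal (x y : ℝ) :
    gaussianPDFReal 0 1 x * gaussianPDFReal 0 1 y = (2 * π)⁻¹ * exp (-(x ^ 2 + y ^ 2) / 2) := by
  rw [gaussianPDFReal_zero_one, gaussianPDFReal_zero_one, mul_mul_mul_comm, ← mul_inv,
    mul_self_sqrt (by positivity), ← exp_add]
  ring_nf

lemma gauss2_eq_withDensity_s5 : gauss2 = volume.withDensity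
    fun z => ENNReal.ofReal (gaussianPDFReal 0 1 z.1 * gaussianPDFReal 0 1 z.2) := by
  rw [gauss2, gaussianReal_of_var_ne_zero _ one_ne_zero,
    prod_withDensity (measurable_gaussianPDF 0 1) (measurable_gaussianPDF 0 1),
    Measure.volume_eq_prod]
  congr with z
  rw [ENNReal.ofReal_mul (gaussianPDFReal_nonneg 0 1 z.1)]
  rfl

lemma gauss2_real_apply {s : Set (ℝ × ℝ)} (hs : MeasurableSet s) :
    gauss2.real s = ∫ z in s, gaussianPDFReal 0 1 z.1 * gaussianPDFReal 0 1 z.2 := by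
  set g : ℝ × ℝ → ℝ := fun z => gaussianPDFReal 0 1 z.1 * gaussianPDFReal 0 1 z.2
  have hg : ∀ z, 0 ≤ g z := fun z =>
    mul_nonneg (gaussianPDFReal_nonneg 0 1 _) (gaussianPDFReal_nonneg 0 1 _)
  have hint : Integrable g := by
    rw [Measure.volume_eq_prod]
    exact (integrable_gaussianPDFReal 0 1).mul_prod (integrable_gaussianPDFReal 0 1)
  rw [measureReal_def, gauss2_eq_withDensity_s5, withDensity_apply _ hs,
    ← ofReal_integral_eq_lintegral_ofReal hint.integrableOn (ae_of_all _ hg),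
    ENNReal.toReal_ofReal (setIntegral_nonneg hs fun z _ => hg z)]

lemma gauss2_real_disk {r : ℝ} (hr : 0 ≤ r) :
    gauss2.real {p | p.1 ^ 2 + p.2 ^ 2 ≤ r ^ 2} = 1 - exp (-r ^ 2 / 2) := by
  set F : ℝ → ℝ := (Iic (r ^ 2)).indicator fun s => (2 * π)⁻¹ * exp (-s / 2)
  have hdisk : MeasurableSet {p : ℝ × ℝ | p.1 ^ 2 + p.2 ^ 2 ≤ r ^ 2} :=
    measurableSet_le (by fun_prop) measurable_const
  have hF : ∀ ρ ∈ Ioi (0 : ℝ),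
      ρ * F (ρ ^ 2) = (Iic r).indicator (fun ρ => (2 * π)⁻¹ * (ρ * exp (-ρ ^ 2 / 2))) ρ := by
    intro ρ hρ
    simp only [F]
    by_cases h : ρ ≤ r
    · rw [indicator_of_mem (show ρ ^ 2 ∈ Iic (r ^ 2) from pow_le_pow_left₀ (le_of_lt hρ) h 2),
        indicator_of_mem (show ρ ∈ Iic r from h)]
      ring
    · rw [indicator_of_notMem (show ρ ^ 2 ∉ Iic (r ^ 2) from ?_),
        indicator_of_notMem (show ρ ∉ Iic r from h), mul_zero]
      simp only [mem_Iic, not_le] at h ⊢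
      exact pow_lt_pow_left₀ h hr two_ne_zero
  calc gauss2.real {p | p.1 ^ 2 + p.2 ^ 2 ≤ r ^ 2}
      = ∫ p : ℝ × ℝ, F (p.1 ^ 2 + p.2 ^ 2) := by
        rw [gauss2_real_apply hdisk, ← integral_indicator hdisk]
        congr with p
        simp only [F, indicator, mem_ofPred_eq, mem_Iic, gaussianPDFReal_mul_gaussianPDFReal]
    _ = 2 * π * ∫ ρ in Ioi 0, ρ * F (ρ ^ 2) := integral_fun_sq_add_sq F
    _ = 2 * π * ((2 * π)⁻¹ * ∫ ρ in (0)..r, ρ * exp (-ρ ^ 2 / 2)) := by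
        rw [setIntegral_congr_fun measurableSet_Ioi hF, integral_indicator measurableSet_Iic,
          Measure.restrict_restrict measurableSet_Iic, Iic_inter_Ioi,
          intervalIntegral.integral_of_le hr, integral_const_mul]
    _ = 1 - exp (-r ^ 2 / 2) := by
        rw [integral_mul_exp_neg_sq_div_two, ← mul_assoc, mul_inv_cancel₀ (by positivity), one_mul]

lemma abs_mul_add_mul_le_of_sq_add_sq_le {a b x y r : ℝ} (hab : a ^ 2 + b ^ 2 = 1)
    (hr : 0 ≤ r) (hxy : x ^ 2 + y ^ 2 ≤ r ^ 2) : |a * x + b * y| ≤ r :=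
  abs_le_of_sq_le_sq (by nlinarith [sq_nonneg (a * y - b * x)]) hr

/-- There is a universal constant `c > 0` such that for `0 < τ < 2`, `α = 1 - τ²/2`,
`β = √(τ² - τ⁴/4)`, all `u, v` with `u ≥ 0` and `αu + βv ≥ 0`, and all `0 < ε < 1/3`:
`1 - e^{-Δ(u,v)²/2} ≤ σ(u,v) ≤ 1 - c ε^{1/2} e^{-(1+ε)Δ(u,v)²/2}`
where `Δ(u,v) = min(u, αu + βv)`. -/
theorem sigma_bounds :
    ∃ c : ℝ, 0 < c ∧
      ∀ τ α β : ℝ, 0 < τ → τ < 2 →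
        α = 1 - τ ^ 2 / 2 → β = Real.sqrt (τ ^ 2 - τ ^ 4 / 4) →
        ∀ u v : ℝ, 0 ≤ u → 0 ≤ α * u + β * v →
          ∀ ε : ℝ, 0 < ε → ε < 1 / 3 →
            1 - Real.exp (-(min u (α * u + β * v)) ^ 2 / 2) ≤ sigmaProb α β u v ∧
              sigmaProb α β u v
                ≤ 1 - c * Real.sqrt ε
                    * Real.exp (-((1 + ε) * (min u (α * u + β * v)) ^ 2) / 2) := by
  refine ⟨(√(2 * π))⁻¹ * exp (-1), by positivity, ?_⟩
  intro τ α β hτ hτ2 hα hβ u v hu hw ε hε hε3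
  have hαβ : α ^ 2 + β ^ 2 = 1 := by
    rw [hα, hβ, sq_sqrt (by nlinarith [mul_nonneg (sq_nonneg τ) (by nlinarith : 0 ≤ 4 - τ ^ 2)])]
    ring
  set w := α * u + β * v
  have hΔ : 0 ≤ min u w := le_min hu hw
  have hσ : sigmaProb α β u v = gauss2.real {z | |z.1| ≤ u ∧ |α * z.1 + β * z.2| ≤ w} := rfl
  refine ⟨?_, ?_⟩
  · rw [hσ, ← gauss2_real_disk hΔ]
    refine measureReal_mono fun z hz => ⟨?_, ?_⟩
    · exact (abs_le_of_sq_le_sq (by nlinarith [sq_nonneg z.2, hz.out]) hΔ).trans (min_le_left _ _)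
    · exact (abs_mul_add_mul_le_of_sq_add_sq_le hαβ hΔ hz).trans (min_le_right _ _)
  · have htail := sqrt_mul_exp_le_gaussianReal_real_Ioi hΔ hε.le (by linarith)
    have hfst : sigmaProb α β u v ≤ 1 - (gaussianReal 0 1).real (Ioi u) := by
      rw [hσ, ← gauss2_map_fst]
      exact measureReal_le_one_sub_map_real_Ioi measurable_fst fun z hz => (abs_le.1 hz.1).2
    have hlin : sigmaProb α β u v ≤ 1 - (gaussianReal 0 1).real (Ioi w) := by
      rw [hσ, ← gauss2_map_linear_of_sq_add_sq_eq_one hαβ]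
      exact measureReal_le_one_sub_map_real_Ioi (by fun_prop) fun z hz => (abs_le.1 hz.2).2
    rcases min_choice u w with h | h <;> rw [h] at htail ⊢ <;> linarith
end
end

section
/- Let 0 < τ < √2, α = 1 − τ²/2, β = √(τ² − τ⁴/4), and t ≥ 0. Then the squared Euclidean distance from the origin to the set {(x, y) ∈ ℝ² : x ≥ t and αx + βy ≥ t} equals (4/(4 − τ²))·t². -/
/-! The wedge is cut out by the unit normals `u = (1, 0)` and `v = (α, β)`, with `⟪u, v⟫ = α`.
Its apex `q = μ • (u + v)`, `μ = t / (1 + α)`, satisfies `‖q‖² = μ (⟪u, q⟫ + ⟪v, q⟫) = 2μt ≤ ⟪q, p⟫`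
for every `p` in the wedge, so by Cauchy–Schwarz it is the nearest point to the origin, and
`‖q‖² = 2t² / (1 + α) = 4t² / (4 - τ²)`. -/

open Real Metric RealInnerProductSpace

section InnerProductSpace

variable {E : Type*} [NormedAddCommGroup E] [InnerProductSpace ℝ E]

theorem infDist_zero_eq_norm_of_sq_norm_le_inner {S : Set E} {q : E} (hq : q ∈ S)
    (h : ∀ p ∈ S, ‖q‖ ^ 2 ≤ ⟪q, p⟫) : infDist 0 S = ‖q‖ := by
  refine le_antisymm (by simpa using infDist_le_dist_of_mem (x := 0) hq) ?_
  refine (le_infDist ⟨q, hq⟩).2 fun p hp => ?_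
  rw [dist_zero_left]
  nlinarith [h p hp, real_inner_le_norm q p, norm_nonneg p, norm_nonneg q]

theorem sq_infDist_zero_wedge {u v : E} (hu : ‖u‖ = 1) (hv : ‖v‖ = 1) (huv : 0 < 1 + ⟪u, v⟫)
    {t : ℝ} (ht : 0 ≤ t) :
    infDist 0 {p : E | t ≤ ⟪u, p⟫ ∧ t ≤ ⟪v, p⟫} ^ 2 = 2 * t ^ 2 / (1 + ⟪u, v⟫) := by
  set q := (t / (1 + ⟪u, v⟫)) • (u + v)
  have hu_q : ⟪u, q⟫ = t := by
    rw [real_inner_smul_right, inner_add_right, real_inner_self_eq_norm_sq, hu]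
    field_simp
  have hv_q : ⟪v, q⟫ = t := by
    rw [real_inner_smul_right, inner_add_right, real_inner_self_eq_norm_sq, hv, real_inner_comm u v]
    field_simp
    ring
  have hq_p (p : E) : ⟪q, p⟫ = t / (1 + ⟪u, v⟫) * (⟪u, p⟫ + ⟪v, p⟫) := by
    rw [real_inner_smul_left, inner_add_left]
  have hq_norm : ‖q‖ ^ 2 = 2 * t ^ 2 / (1 + ⟪u, v⟫) := by
    rw [← real_inner_self_eq_norm_sq, hq_p, hu_q, hv_q]
    ring
  have hq_mem : q ∈ {p : E | t ≤ ⟪u, p⟫ ∧ t ≤ ⟪v, p⟫} := ⟨hu_q.ge, hv_q.ge⟩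
  rw [infDist_zero_eq_norm_of_sq_norm_le_inner hq_mem, hq_norm]
  rintro p ⟨hup, hvp⟩
  rw [hq_norm, hq_p]
  have hμ : 0 ≤ t / (1 + ⟪u, v⟫) := div_nonneg ht huv.le
  calc 2 * t ^ 2 / (1 + ⟪u, v⟫) = t / (1 + ⟪u, v⟫) * (t + t) := by ring
    _ ≤ t / (1 + ⟪u, v⟫) * (⟪u, p⟫ + ⟪v, p⟫) := by gcongr

end InnerProductSpace

/-- For `0 < τ < √2`, `α = 1 - τ²/2`, `β = √(τ² - τ⁴/4)`, and `t ≥ 0`, the squared Euclidean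
distance from the origin to `{(x,y) : x ≥ t ∧ αx + βy ≥ t}` equals `(4/(4-τ²))·t²`. -/
theorem sq_dist_to_wedge (τ α β t : ℝ) (hτ0 : 0 < τ) (hτ2 : τ < Real.sqrt 2)
    (hα : α = 1 - τ ^ 2 / 2) (hβ : β = Real.sqrt (τ ^ 2 - τ ^ 4 / 4)) (ht : 0 ≤ t) :
    (Metric.infDist (0 : EuclideanSpace ℝ (Fin 2))
        {p : EuclideanSpace ℝ (Fin 2) | t ≤ p 0 ∧ t ≤ α * p 0 + β * p 1}) ^ 2
      = 4 / (4 - τ ^ 2) * t ^ 2 := by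
  have hτsq : τ ^ 2 < 2 := (lt_sqrt hτ0.le).1 hτ2
  have hβsq : β ^ 2 = τ ^ 2 - τ ^ 4 / 4 := by
    rw [hβ, sq_sqrt]
    nlinarith
  set u : EuclideanSpace ℝ (Fin 2) := EuclideanSpace.single 0 1
  set v : EuclideanSpace ℝ (Fin 2) := !₂[α, β]
  have hu : ‖u‖ = 1 := by simp [u]
  have hv : ‖v‖ = 1 := by
    rw [EuclideanSpace.norm_eq, sqrt_eq_one]
    simp only [v, Fin.sum_univ_two, Matrix.cons_val_zero, Matrix.cons_val_one, norm_eq_abs, sq_abs,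
      hβsq, hα]
    ring
  have huv : ⟪u, v⟫ = α := by simp [u, v, EuclideanSpace.inner_single_left]
  have hwedge : {p : EuclideanSpace ℝ (Fin 2) | t ≤ p 0 ∧ t ≤ α * p 0 + β * p 1}
      = {p | t ≤ ⟪u, p⟫ ∧ t ≤ ⟪v, p⟫} := by
    ext p
    simp [u, v, PiLp.inner_apply, Fin.sum_univ_two, mul_comm]
  have h1α : 0 < 1 + ⟪u, v⟫ := by rw [huv, hα]; linarith
  rw [hwedge, sq_infDist_zero_wedge hu hv h1α ht, huv, hα]
  field_simp
  ring
end
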